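/- The bounded operator T := I − 𝓜_{z_n} 𝓜_{z_n}* on H²(∂_d△ₙ) satisfies 𝓜_{z_j}^{*k} T 𝓜_{z_i}^{k} = 0 for every integer k ≥ 1 and all 1 ≤ i, j ≤ n, yet T is not a compact operator. (Hence the converse of the compactness criterion fails for the Hartogs triangle.) -/

import Mathlib

open MeasureTheory Filter Topology ComplexConjugate

noncomputable section

instance fact_one_pos : Fact ((0:ℝ) < 1) := ⟨one_pos⟩

abbrev Torus (n : ℕ) := Fin n → AddCircle (1 : ℝ)

abbrev L2T (n : ℕ) := Lp ℂ 2 (volume : Measure (Torus n))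

abbrev LinfT (n : ℕ) := Lp ℂ ⊤ (volume : Measure (Torus n))

def char {n : ℕ} (α : Fin n → ℤ) : Torus n → ℂ := fun x => ∏ j, fourier (α j) (x j)

lemma char_continuous {n : ℕ} (α : Fin n → ℤ) : Continuous (char α) :=
  continuous_finset_prod _ fun j _ => (fourier (α j)).continuous.comp (continuous_apply j)

lemma char_memLp {n : ℕ} (α : Fin n → ℤ) (p : ENNReal) :
    MemLp (char α) p (volume : Measure (Torus n)) := by
  refine (memLp_top_of_bound ((char_continuous α).aestronglyMeasurable) 1 ?_).mono_exponent le_top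
  filter_upwards with x
  simp only [char, norm_prod]
  calc ∏ j, ‖fourier (α j) (x j)‖
      = ∏ j : Fin n, (1:ℝ) := by
        refine Finset.prod_congr rfl fun j _ => ?_
        rw [fourier_apply]; exact Circle.norm_coe _
    _ ≤ 1 := by simp

def charL2 {n : ℕ} (α : Fin n → ℤ) : L2T n := (char_memLp α 2).toLp (char α)

def hardyT (n : ℕ) : Submodule ℂ (L2T n) :=
  (Submodule.span ℂ
    (charL2 '' {α : Fin n → ℤ | ∀ k : Fin n, 0 ≤ (∑ j ∈ Finset.Iic k, α j) + (k.val : ℤ)})).topologicalClosure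

def hardyD (n : ℕ) : Submodule ℂ (L2T n) :=
  (Submodule.span ℂ (charL2 '' {α : Fin n → ℤ | ∀ j, 0 ≤ α j})).topologicalClosure

instance hardyT.completeSpace (n : ℕ) : CompleteSpace (hardyT n) :=
  (Submodule.isClosed_topologicalClosure _).completeSpace_coe

instance hardyD.completeSpace (n : ℕ) : CompleteSpace (hardyD n) :=
  (Submodule.isClosed_topologicalClosure _).completeSpace_coe

def IsToeplitzOn {n : ℕ} (K : Submodule ℂ (L2T n)) (φ : Torus n → ℂ) (T : K →L[ℂ] K) : Prop :=
  ∀ f g : K,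
    (inner ℂ ((g : L2T n)) ((T f : L2T n)) : ℂ) =
      ∫ x, conj ((g : L2T n) x) * (φ x * (f : L2T n) x) ∂volume

def IsCoordMult {n : ℕ} (j : Fin n) (M : hardyT n →L[ℂ] hardyT n) : Prop :=
  ∀ f : hardyT n,
    ((M f : L2T n) : Torus n → ℂ) =ᵐ[volume]
      fun x => fourier 1 (x j) * ((f : L2T n) : Torus n → ℂ) x

def IsHankelT {n : ℕ} (φ : Torus n → ℂ) (H : hardyT n →L[ℂ] L2T n) : Prop :=
  (∀ f : hardyT n, H f ∈ (hardyT n)ᗮ) ∧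
    ∀ f : hardyT n, ∀ g : L2T n, g ∈ (hardyT n)ᗮ →
      (inner ℂ g (H f) : ℂ) = ∫ x, conj (g x) * (φ x * (f : L2T n) x) ∂volume

def IsAnalyticSymbolF {n : ℕ} (φ : Torus n → ℂ) : Prop :=
  ∀ α : Fin n → ℤ, (¬ ∀ k : Fin n, 0 ≤ ∑ j ∈ Finset.Iic k, α j) →
    ∫ x, φ x * char (-α) x ∂(volume : Measure (Torus n)) = 0

def IsInnerSymbolF {n : ℕ} (φ : Torus n → ℂ) : Prop :=
  IsAnalyticSymbolF φ ∧ ∀ᵐ x ∂(volume : Measure (Torus n)), ‖φ x‖ = 1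

def tauMap {n : ℕ} (x : Torus n) : Torus n := fun j => ∑ k ∈ Finset.Ici j, x k

def sigmaMap {n : ℕ} (x : Torus n) : Torus n :=
  fun j => if h : (j : ℕ) + 1 < n then x j - x ⟨(j : ℕ) + 1, h⟩ else x j

def jacF {n : ℕ} (x : Torus n) : ℂ := ∏ j : Fin n, fourier (j.val : ℤ) (x j)

def jacInvF {n : ℕ} (x : Torus n) : ℂ :=
  ∏ j : Fin n, fourier (if j.val = 0 then (0 : ℤ) else -1) (x j)

/-!
Coordinate multipliers are isometries, so with `V = 𝓜_{z_n}` the operator `T = I - V V*` is the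
orthogonal projection onto `(ran V)ᗮ`. On characters `𝓜_{z_i}^k ζ^α = V ζ^{α + k e_i - e_n}`,
and `α + k e_i - e_n ∈ 𝓘` when `k ≥ 1`; since the characters span a dense subspace,
`T 𝓜_{z_i}^k = 0`. On the other hand the characters `ζ^{m e_1 - (m + n - 1) e_n}`, `m ∈ ℕ`, have
indices in `𝓘` but not in `e_n + 𝓘` (coordinate sum `1 - n`, against at least `2 - n`), so they
are orthogonal to `ran V`: an infinite orthonormal family fixed by `T`, which therefore is not
compact.
-/

open Finset

section OrthonormalFamily

variable {𝕜 E : Type*} [RCLike 𝕜] [NormedAddCommGroup E] [InnerProductSpace 𝕜 E]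

lemma Orthonormal.dist_eq_sqrt_two {ι : Type*} {v : ι → E} (hv : Orthonormal 𝕜 v) {i j : ι}
    (hij : i ≠ j) : dist (v i) (v j) = √2 := by
  rw [dist_eq_norm, ← Real.sqrt_sq (norm_nonneg _), @norm_sub_sq 𝕜, hv.inner_eq_zero hij,
    hv.norm_eq_one, hv.norm_eq_one]
  norm_num

theorem Orthonormal.not_isCompactOperator_of_forall_apply_eq {v : ℕ → E} (hv : Orthonormal 𝕜 v)
    {T : E →L[𝕜] E} (hT : ∀ m, T (v m) = v m) : ¬ IsCompactOperator T := by
  intro hT_compact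
  have hv_mem : ∀ m, v m ∈ closure (T '' Metric.closedBall 0 1) := fun m =>
    subset_closure ⟨v m, by simp [hv.norm_eq_one], hT m⟩
  obtain ⟨_, _, φ, hφ, hlim⟩ :=
    (hT_compact.isCompact_closure_image_closedBall 1).tendsto_subseq hv_mem
  obtain ⟨N, hN⟩ := Metric.cauchySeq_iff'.mp hlim.cauchySeq 1 one_pos
  have h := hN (N + 1) N.le_succ
  rw [Function.comp_apply, Function.comp_apply, hv.dist_eq_sqrt_two (hφ N.lt_succ_self).ne'] at h
  exact h.not_gt Real.one_lt_sqrt_two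

end OrthonormalFamily

lemma integral_fourier_unitAddCircle (m : ℤ) :
    ∫ x : AddCircle (1 : ℝ), fourier m x = if m = 0 then 1 else 0 := by
  simpa [fourierCoeff, AddCircle.integral_haarAddCircle, Pi.single_apply, eq_comm] using
    congrFun (fourierCoeff_fourier (T := 1) m) 0

lemma integral_char {n : ℕ} (α : Fin n → ℤ) : ∫ x, char α x = if α = 0 then 1 else 0 := by
  simp only [char, integral_fintype_prod_volume_eq_prod, integral_fourier_unitAddCircle,
    prod_boole, mem_univ, true_implies, funext_iff, Pi.zero_apply]

-- `charL2 α` is definitionally `ContinuousMap.toLp 2 volume ℂ (UnitAddTorus.mFourier α)`.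
lemma orthonormal_charL2 (n : ℕ) : Orthonormal ℂ (charL2 (n := n)) := by
  rw [orthonormal_iff_ite]
  intro α β
  change inner ℂ (ContinuousMap.toLp 2 volume ℂ (UnitAddTorus.mFourier α))
    (ContinuousMap.toLp 2 volume ℂ (UnitAddTorus.mFourier β)) = _
  rw [ContinuousMap.inner_toLp]
  simp only [← UnitAddTorus.mFourier_neg, ← UnitAddTorus.mFourier_add]
  exact (integral_char _).trans (by simp only [add_neg_eq_zero, eq_comm])

lemma coeFn_charL2 {n : ℕ} (α : Fin n → ℤ) : ⇑(charL2 α) =ᵐ[volume] char α :=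
  MemLp.coeFn_toLp _

lemma char_add_single {n : ℕ} (α : Fin n → ℤ) (j : Fin n) (x : Torus n) :
    char (α + Pi.single j 1) x = fourier 1 (x j) * char α x :=
  (UnitAddTorus.mFourier_add (x := x)).trans <| by
    rw [UnitAddTorus.mFourier_single, mul_comm]
    rfl

def hardyIndex (n : ℕ) : Set (Fin n → ℤ) :=
  {α | ∀ k : Fin n, 0 ≤ (∑ j ∈ Iic k, α j) + (k.val : ℤ)}

section HardyIndex

variable {n : ℕ} {i last : Fin n}

lemma add_mem_hardyIndex {α β : Fin n → ℤ} (hα : α ∈ hardyIndex n)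
    (hβ : ∀ k, 0 ≤ ∑ j ∈ Iic k, β j) : α + β ∈ hardyIndex n := fun k => by
  have := add_nonneg (hα k) (hβ k)
  simp only [Pi.add_apply, sum_add_distrib]
  linarith

lemma sum_Iic_single_nonneg (k : Fin n) {c : ℤ} (hc : 0 ≤ c) :
    0 ≤ ∑ j ∈ Iic k, Pi.single i c j := by
  rw [sum_pi_single']
  split_ifs <;> omega

lemma sum_Iic_single_sub_single_nonneg (hlast : IsTop last) (k : Fin n) {c : ℤ} (hc : 1 ≤ c) :
    0 ≤ ∑ j ∈ Iic k, (Pi.single i c - Pi.single last 1 : Fin n → ℤ) j := by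
  have : last ≤ k → i ≤ k := fun h => (hlast i).trans h
  simp only [Pi.sub_apply, sum_sub_distrib, sum_pi_single', mem_Iic]
  split_ifs <;> omega

lemma single_sub_single_mem_hardyIndex (hlast : IsTop last) (m : ℕ) :
    Pi.single i (m : ℤ) - Pi.single last ((m : ℤ) + last) ∈ hardyIndex n := fun k => by
  have hk : k.val ≤ last.val := hlast k
  have hik : last ≤ k → i ≤ k := fun h => (hlast i).trans h
  have hkl : last ≤ k → k.val = last.val := fun h => le_antisymm hk h
  simp only [Pi.sub_apply, sum_sub_distrib, sum_pi_single', mem_Iic]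
  split_ifs <;> omega

lemma neg_le_sum_of_mem_hardyIndex (hlast : IsTop last) {γ : Fin n → ℤ} (hγ : γ ∈ hardyIndex n) :
    -(last.val : ℤ) ≤ ∑ j, γ j := by
  have h := hγ last
  rw [show Iic last = univ from eq_univ_of_forall fun j => mem_Iic.mpr (hlast j)] at h
  omega

lemma add_single_ne_single_sub_single (hlast : IsTop last) {γ : Fin n → ℤ}
    (hγ : γ ∈ hardyIndex n) (m : ℕ) :
    γ + Pi.single last 1 ≠ Pi.single i (m : ℤ) - Pi.single last ((m : ℤ) + last) := fun h => by
  have hsum := congrArg (fun α : Fin n → ℤ => ∑ j, α j) h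
  simp only [Pi.add_apply, Pi.sub_apply, sum_add_distrib, sum_sub_distrib, sum_pi_single',
    mem_univ, if_true] at hsum
  have := neg_le_sum_of_mem_hardyIndex hlast hγ
  omega

lemma injective_single_sub_single (hi : i ≠ last) :
    Function.Injective fun m : ℕ =>
      (Pi.single i (m : ℤ) - Pi.single last ((m : ℤ) + last) : Fin n → ℤ) :=
  fun m m' h => by simpa [Pi.single_eq_of_ne hi] using congrFun h i

end HardyIndex

section HardySpace

variable {n : ℕ}

lemma charL2_mem_hardyT {α : Fin n → ℤ} (hα : α ∈ hardyIndex n) : charL2 α ∈ hardyT n :=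
  Submodule.le_topologicalClosure _ (Submodule.subset_span ⟨α, hα, rfl⟩)

def hardyChar {α : Fin n → ℤ} (hα : α ∈ hardyIndex n) : hardyT n :=
  ⟨charL2 α, charL2_mem_hardyT hα⟩

lemma dense_span_hardyChar :
    Dense (Submodule.span ℂ {f | ∃ α, ∃ hα : α ∈ hardyIndex n, f = hardyChar hα} :
      Set (hardyT n)) := by
  have hval : Subtype.val '' {f | ∃ α, ∃ hα : α ∈ hardyIndex n, f = hardyChar hα} =
      charL2 '' hardyIndex n := by
    refine Set.Subset.antisymm ?_ ?_
    · rintro _ ⟨_, ⟨α, hα, rfl⟩, rfl⟩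
      exact ⟨α, hα, rfl⟩
    · rintro _ ⟨α, hα, rfl⟩
      exact ⟨hardyChar hα, ⟨α, hα, rfl⟩, rfl⟩
  rw [Subtype.dense_iff, ← Submodule.coe_subtype, ← Submodule.map_coe, Submodule.map_span,
    Submodule.coe_subtype, hval, ← Submodule.topologicalClosure_coe]
  rfl

lemma hardyT_ext {F : Type*} [NormedAddCommGroup F] [NormedSpace ℂ F] {A B : hardyT n →L[ℂ] F}
    (h : ∀ α (hα : α ∈ hardyIndex n), A (hardyChar hα) = B (hardyChar hα)) : A = B :=
  ContinuousLinearMap.ext_on dense_span_hardyChar (by rintro _ ⟨α, hα, rfl⟩; exact h α hα)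

end HardySpace

namespace IsCoordMult

variable {n : ℕ} {j : Fin n} {M : hardyT n →L[ℂ] hardyT n}

lemma norm_map (hM : IsCoordMult j M) (f : hardyT n) : ‖M f‖ = ‖f‖ := by
  change ‖(M f : L2T n)‖ = ‖(f : L2T n)‖
  rw [Lp.norm_def, Lp.norm_def, eLpNorm_congr_ae (hM f)]
  congr 1
  refine eLpNorm_congr_norm_ae (Eventually.of_forall fun x => ?_)
  rw [norm_mul, fourier_apply, Circle.norm_coe, one_mul]

lemma adjoint_mul_self (hM : IsCoordMult j M) : ContinuousLinearMap.adjoint M * M = 1 :=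
  M.norm_map_iff_adjoint_comp_self.mp hM.norm_map

lemma apply_hardyChar (hM : IsCoordMult j M) {α : Fin n → ℤ} (hα : α ∈ hardyIndex n) :
    M (hardyChar hα) =
      hardyChar (add_mem_hardyIndex hα fun k => sum_Iic_single_nonneg (i := j) k zero_le_one) := by
  refine Subtype.ext (Lp.ext ?_)
  filter_upwards [hM (hardyChar hα), coeFn_charL2 α, coeFn_charL2 (α + Pi.single j 1)]
    with x hMx hαx hαjx
  change _ = charL2 (α + Pi.single j 1) x
  rw [hMx, hardyChar, hαx, hαjx, char_add_single]

lemma pow_apply_hardyChar (hM : IsCoordMult j M) {α : Fin n → ℤ} (hα : α ∈ hardyIndex n)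
    (k : ℕ) : ((M ^ k) (hardyChar hα) : L2T n) = charL2 (α + Pi.single j (k : ℤ)) := by
  induction k generalizing α with
  | zero => simp [hardyChar]
  | succ k ih =>
    rw [pow_succ, mul_apply_eq_comp, hM.apply_hardyChar, ih, add_assoc,
      ← Pi.single_add, Nat.cast_succ, add_comm (1 : ℤ)]

lemma adjoint_apply_hardyChar_eq_zero (hM : IsCoordMult j M) {α : Fin n → ℤ}
    (hα : α ∈ hardyIndex n) (hne : ∀ γ ∈ hardyIndex n, γ + Pi.single j 1 ≠ α) :
    ContinuousLinearMap.adjoint M (hardyChar hα) = 0 := by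
  suffices (innerSL ℂ (hardyChar hα)).comp M = 0 from
    ext_inner_right ℂ fun f => by
      rw [ContinuousLinearMap.adjoint_inner_left, inner_zero_left]
      exact congr($this f)
  refine hardyT_ext fun γ hγ => ?_
  rw [ContinuousLinearMap.comp_apply, hM.apply_hardyChar, innerSL_apply_apply,
    Submodule.coe_inner, zero_apply]
  exact (orthonormal_charL2 n).inner_eq_zero (hne γ hγ).symm

end IsCoordMult

section ProjectionOntoRangeOrthogonal

variable {n : ℕ} {i last : Fin n} {V W : hardyT n →L[ℂ] hardyT n}

lemma one_sub_mul_adjoint_mul_pow_eq_zero (hV : IsCoordMult last V) (hlast : IsTop last)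
    (hW : IsCoordMult i W) {k : ℕ} (hk : 1 ≤ k) :
    (1 - V * ContinuousLinearMap.adjoint V) * W ^ k = 0 := by
  refine hardyT_ext fun α hα => ?_
  have hβ := add_mem_hardyIndex hα
    (sum_Iic_single_sub_single_nonneg (i := i) hlast · (c := k) (by exact_mod_cast hk))
  have hWk : (W ^ k) (hardyChar hα) = V (hardyChar hβ) := by
    refine Subtype.ext ?_
    rw [hW.pow_apply_hardyChar, hV.apply_hardyChar]
    exact congrArg charL2 (by abel)
  have hproj : (1 - V * ContinuousLinearMap.adjoint V) * V = 0 := by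
    rw [sub_mul, mul_assoc, hV.adjoint_mul_self, mul_one, one_mul, sub_self]
  rw [mul_apply_eq_comp, hWk, ← mul_apply_eq_comp, hproj, zero_apply, zero_apply]

lemma not_isCompactOperator_one_sub_mul_adjoint (hV : IsCoordMult last V) (hlast : IsTop last)
    (hi : i ≠ last) :
    ¬ IsCompactOperator (⇑(1 - V * ContinuousLinearMap.adjoint V : hardyT n →L[ℂ] hardyT n)) := by
  have hα := single_sub_single_mem_hardyIndex (i := i) hlast
  refine Orthonormal.not_isCompactOperator_of_forall_apply_eq (v := fun m => hardyChar (hα m))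
    ?_ fun m => ?_
  · exact ((orthonormal_charL2 n).comp _ (injective_single_sub_single hi)).codRestrict _ _
  · rw [sub_apply, one_apply_eq_self, mul_apply_eq_comp, hV.adjoint_apply_hardyChar_eq_zero (hα m)
      fun γ hγ => add_single_ne_single_sub_single hlast hγ m, map_zero, sub_zero]

end ProjectionOntoRangeOrthogonal

/-- `T = I − 𝓜_{z_n} 𝓜_{z_n}*` satisfies `𝓜_{z_j}^{*k} T 𝓜_{z_i}^{k} = 0` for `k ≥ 1`,
yet `T` is not compact. -/
theorem stmt11 {n : ℕ} (hn : 2 ≤ n)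
    (M : Fin n → (hardyT n →L[ℂ] hardyT n)) (hM : ∀ j, IsCoordMult j (M j)) :
    (∀ k : ℕ, 1 ≤ k → ∀ i j : Fin n,
      (ContinuousLinearMap.adjoint (M j)) ^ k *
        (1 - M ⟨n - 1, by omega⟩ * ContinuousLinearMap.adjoint (M ⟨n - 1, by omega⟩)) *
        (M i) ^ k = 0) ∧
    ¬ IsCompactOperator
        (⇑(1 - M ⟨n - 1, by omega⟩ * ContinuousLinearMap.adjoint (M ⟨n - 1, by omega⟩) :
          hardyT n →L[ℂ] hardyT n)) := by
  have hlast : IsTop (⟨n - 1, by omega⟩ : Fin n) := fun j => Fin.mk_le_mk.mpr (by omega)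
  refine ⟨fun k hk i j => ?_, not_isCompactOperator_one_sub_mul_adjoint (hM _) hlast
    (i := ⟨0, by omega⟩) (Fin.ne_of_val_ne (show 0 ≠ n - 1 by omega))⟩
  rw [mul_assoc, one_sub_mul_adjoint_mul_pow_eq_zero (hM _) hlast (hM i) hk, mul_zero]
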